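/- Let ω ≥ 1 and γ ∈ [1/√ω, √ω]. Define u^ω_γ on the domain Ω^ω_γ = {(x,y) : |y| < φ^ω_γ(x)} piecewise by: u = γ·cos x + cos y if |x|,|y| ≤ π/2; u = γ√ω·cos((|x|-π/2)/√ω + π/2) + cos y if |x| ≥ π/2; u = γ·cos x + √ω·cos((|y|-π/2)/√ω + π/2) if |y| ≥ π/2. Then u^ω_γ is continuous on the closure of Ω^ω_γ, strictly positive in Ω^ω_γ, and vanishes on ∂Ω^ω_γ. -/

import Mathlib

/-!
On the closure of `Ω^ω_γ` the piecewise formula separates as `u(x, y) = γ P(x) + P(y)` for a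
single even profile `P = cosProfile √ω`: the cosine on `[-π/2, π/2]`, continued beyond
`±π/2` by `t ↦ √ω cos((|t| - π/2)/√ω + π/2)`. It is continuous and strictly decreasing
on `[0, π/2 + √ω π/2]`, and the boundary curve is exactly its level set `P(φ(x)) = -γ P(x)`
(this is how `arcsin` and `arccos` enter `φ`). Hence `u(x, y) = P(|y|) - P(φ(x))`, which vanishes
where `|y| = φ(x)` and is positive where `|y| < φ(x)`.
-/

open Real Set

/-- The function `φ^ω_γ`, defined piecewise. -/
noncomputable def phiF (om ga x : ℝ) : ℝ :=
  if |x| ≤ π / 2 then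
    π / 2 + Real.sqrt om * Real.arcsin ((ga / Real.sqrt om) * Real.cos x)
  else
    Real.arccos (ga * Real.sqrt om * Real.sin ((|x| - π / 2) / Real.sqrt om))

/-- The domain `Ω^ω_γ = {(x,y) : |y| < φ^ω_γ(x)}` (with `x` in the domain of `φ^ω_γ`). -/
noncomputable def OmDom (om ga : ℝ) : Set (ℝ × ℝ) :=
  {p | |p.1| ≤ π / 2 + Real.sqrt om * Real.arcsin (1 / (ga * Real.sqrt om)) ∧
       |p.2| < phiF om ga p.1}

/-- The eigenfunction `u^ω_γ`, defined piecewise. -/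
noncomputable def uEig (om ga x y : ℝ) : ℝ :=
  if |x| ≤ π / 2 ∧ |y| ≤ π / 2 then ga * Real.cos x + Real.cos y
  else if π / 2 ≤ |x| then
    ga * Real.sqrt om * Real.cos ((|x| - π / 2) / Real.sqrt om + π / 2) + Real.cos y
  else
    ga * Real.cos x + Real.sqrt om * Real.cos ((|y| - π / 2) / Real.sqrt om + π / 2)

noncomputable def cosProfile (s t : ℝ) : ℝ :=
  if |t| ≤ π / 2 then cos t else s * cos ((|t| - π / 2) / s + π / 2)

section cosProfile

variable {s t : ℝ}

theorem continuous_cosProfile (s : ℝ) : Continuous (cosProfile s) := by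
  refine Continuous.if_le continuous_cos (continuous_const.mul (continuous_cos.comp
    (((continuous_abs.sub continuous_const).div_const _).add continuous_const)))
    continuous_abs continuous_const fun t ht => ?_
  rw [← cos_abs, ht]
  simp

theorem cosProfile_abs (s t : ℝ) : cosProfile s |t| = cosProfile s t := by
  simp only [cosProfile, abs_abs, cos_abs]

theorem cosProfile_of_abs_le (ht : |t| ≤ π / 2) : cosProfile s t = cos t := if_pos ht

theorem cosProfile_of_pi_div_two_le (ht : π / 2 ≤ t) :
    cosProfile s t = -(s * sin ((t - π / 2) / s)) := by
  rw [cosProfile, abs_of_nonneg (pi_div_two_pos.le.trans ht)]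
  split_ifs with h
  · simp [le_antisymm h ht]
  · rw [cos_add_pi_div_two, mul_neg]

theorem strictAntiOn_cosProfile (hs : 0 < s) :
    StrictAntiOn (cosProfile s) (Icc 0 (π / 2 + s * (π / 2))) := by
  have hcos : StrictAntiOn (cosProfile s) (Icc 0 (π / 2)) := by
    refine strictAntiOn_cos.mono (Icc_subset_Icc_right (by linarith [pi_pos])) |>.congr
      fun t ht => (cosProfile_of_abs_le ?_).symm
    rw [abs_of_nonneg ht.1]; exact ht.2
  have hsin : StrictAntiOn (cosProfile s) (Icc (π / 2) (π / 2 + s * (π / 2))) := by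
    intro a ha b hb hab
    have hmaps : ∀ t ∈ Icc (π / 2) (π / 2 + s * (π / 2)),
        (t - π / 2) / s ∈ Icc (-(π / 2)) (π / 2) := fun t ht =>
      ⟨by linarith [div_nonneg (sub_nonneg.2 ht.1) hs.le, pi_pos],
        div_le_of_le_mul₀ hs.le pi_div_two_pos.le (by linarith [ht.2])⟩
    rw [cosProfile_of_pi_div_two_le ha.1, cosProfile_of_pi_div_two_le hb.1, neg_lt_neg_iff]
    exact mul_lt_mul_of_pos_left (strictMonoOn_sin (hmaps a ha) (hmaps b hb)
      (div_lt_div_of_pos_right (by linarith) hs)) hs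
  rw [← Icc_union_Icc_eq_Icc pi_div_two_pos.le (by nlinarith [pi_pos])]
  exact hcos.union hsin (isGreatest_Icc pi_div_two_pos.le) (isLeast_Icc (by nlinarith [pi_pos]))

end cosProfile

noncomputable def phiEnd (om ga : ℝ) : ℝ := π / 2 + √om * arcsin (1 / (ga * √om))

section phiF

variable {om ga x : ℝ}

theorem continuous_phiF (om ga : ℝ) : Continuous (phiF om ga) := by
  refine Continuous.if_le (continuous_const.add (continuous_const.mul (continuous_arcsin.comp
    (continuous_const.mul continuous_cos)))) (continuous_arccos.comp (continuous_const.mul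
    (continuous_sin.comp ((continuous_abs.sub continuous_const).div_const _))))
    continuous_abs continuous_const fun x hx => ?_
  rw [← cos_abs, hx]
  simp

theorem phiF_of_pi_div_two_le (hx : π / 2 ≤ |x|) :
    phiF om ga x = arccos (ga * √om * sin ((|x| - π / 2) / √om)) := by
  rw [phiF]
  split_ifs with h
  · have hx' : |x| = π / 2 := le_antisymm h hx
    rw [← cos_abs, hx']
    simp
  · rfl

theorem phiF_spec_of_abs_le (hs : 0 < √om) (hga₀ : 0 ≤ ga) (hga : ga ≤ √om)
    (hx : |x| ≤ π / 2) :
    phiF om ga x ∈ Icc (π / 2) (π / 2 + √om * (π / 2)) ∧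
      cosProfile √om (phiF om ga x) = -(ga * cosProfile √om x) := by
  have hcos : 0 ≤ cos x := cos_nonneg_of_mem_Icc (abs_le.1 hx)
  have hz₀ : 0 ≤ ga / √om * cos x := by positivity
  have hz₁ : ga / √om * cos x ≤ 1 :=
    mul_le_one₀ (div_le_one_of_le₀ hga hs.le) hcos (cos_le_one x)
  have ha₀ := arcsin_nonneg.2 hz₀
  have ha₁ := arcsin_le_pi_div_two (ga / √om * cos x)
  rw [phiF, if_pos hx]
  refine ⟨⟨by nlinarith, by nlinarith⟩, ?_⟩
  rw [cosProfile_of_pi_div_two_le (by nlinarith), cosProfile_of_abs_le hx, add_sub_cancel_left,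
    mul_div_cancel_left₀ _ hs.ne', sin_arcsin (by linarith) hz₁]
  field_simp

theorem phiF_spec_of_pi_div_two_le (hs : 0 < √om) (hgs : 1 ≤ ga * √om)
    (hx₁ : π / 2 ≤ |x|) (hx₂ : |x| ≤ phiEnd om ga) :
    phiF om ga x ∈ Icc 0 (π / 2) ∧
      cosProfile √om (phiF om ga x) = -(ga * cosProfile √om x) := by
  set r := (|x| - π / 2) / √om
  have hinv : 1 / (ga * √om) ≤ 1 := (div_le_one (by linarith)).2 hgs
  have hr₀ : 0 ≤ r := div_nonneg (by linarith) hs.le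
  have hr : r ≤ arcsin (1 / (ga * √om)) := by
    rw [phiEnd] at hx₂
    rw [div_le_iff₀ hs]
    linarith
  have hsin₀ : 0 ≤ sin r := sin_nonneg_of_nonneg_of_le_pi hr₀
    (by linarith [arcsin_le_pi_div_two (1 / (ga * √om)), pi_pos])
  have hsin : sin r ≤ 1 / (ga * √om) := by
    refine (sin_le_sin_of_le_of_le_pi_div_two (by linarith [pi_pos]) (arcsin_le_pi_div_two _)
      hr).trans_eq (sin_arcsin ?_ hinv)
    linarith [one_div_pos.2 (by linarith : 0 < ga * √om)]
  have hz₀ : 0 ≤ ga * √om * sin r := mul_nonneg (by linarith) hsin₀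
  have hz₁ : ga * √om * sin r ≤ 1 := by
    calc ga * √om * sin r ≤ ga * √om * (1 / (ga * √om)) := by gcongr
      _ = 1 := mul_one_div_cancel (by linarith)
  have hφ : phiF om ga x ∈ Icc 0 (π / 2) := by
    rw [phiF_of_pi_div_two_le hx₁]
    exact ⟨arccos_nonneg _, arccos_le_pi_div_two.2 hz₀⟩
  refine ⟨hφ, ?_⟩
  rw [cosProfile_of_abs_le ((abs_of_nonneg hφ.1).trans_le hφ.2), phiF_of_pi_div_two_le hx₁,
    cos_arccos (by linarith) hz₁, ← cosProfile_abs, cosProfile_of_pi_div_two_le hx₁]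
  ring

theorem phiF_spec (hs : 0 < √om) (hgs : 1 ≤ ga * √om) (hga : ga ≤ √om)
    (hx : |x| ≤ phiEnd om ga) :
    phiF om ga x ∈ Icc 0 (π / 2 + √om * (π / 2)) ∧
      (π / 2 ≤ |x| → phiF om ga x ≤ π / 2) ∧
      cosProfile √om (phiF om ga x) = -(ga * cosProfile √om x) := by
  have hright : π / 2 ≤ π / 2 + √om * (π / 2) := by nlinarith [pi_pos]
  by_cases hx₁ : π / 2 ≤ |x|
  · obtain ⟨hφ, hcos⟩ := phiF_spec_of_pi_div_two_le hs hgs hx₁ hx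
    exact ⟨⟨hφ.1, hφ.2.trans hright⟩, fun _ => hφ.2, hcos⟩
  · have hga₀ : 0 ≤ ga := by nlinarith
    obtain ⟨hφ, hcos⟩ := phiF_spec_of_abs_le hs hga₀ hga (not_le.1 hx₁).le
    exact ⟨⟨pi_div_two_pos.le.trans hφ.1, hφ.2⟩, fun h => absurd h hx₁, hcos⟩

theorem phiF_eq_zero_of_abs_eq_phiEnd (hs : 0 < √om) (hgs : 1 ≤ ga * √om)
    (hx : |x| = phiEnd om ga) : phiF om ga x = 0 := by
  have hinv₀ : 0 < 1 / (ga * √om) := one_div_pos.2 (by linarith)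
  have hx₁ : π / 2 ≤ |x| := by rw [hx, phiEnd]; nlinarith [arcsin_nonneg.2 hinv₀.le]
  rw [phiF_of_pi_div_two_le hx₁, hx, phiEnd, add_sub_cancel_left, mul_div_cancel_left₀ _ hs.ne',
    sin_arcsin (by linarith) ((div_le_one (by linarith)).2 hgs),
    mul_one_div_cancel (by linarith), arccos_one]

end phiF

theorem uEig_eq_cosProfile {om ga x y : ℝ} (hxy : π / 2 ≤ |x| → |y| ≤ π / 2) :
    uEig om ga x y = ga * cosProfile √om x + cosProfile √om y := by
  unfold uEig cosProfile
  by_cases hx : |x| ≤ π / 2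
  · by_cases hy : |y| ≤ π / 2
    · simp only [hx, hy, and_self, if_true]
    · have hx' : |x| < π / 2 := lt_of_le_of_ne hx fun h => hy (hxy h.ge)
      simp only [hx, hy, and_false, if_false, not_le.2 hx', if_true]
  · have hy := hxy (not_le.1 hx).le
    simp only [hx, hy, false_and, if_false, (not_le.1 hx).le, if_true, mul_assoc]

noncomputable def OmDomClosed (om ga : ℝ) : Set (ℝ × ℝ) :=
  {p | |p.1| ≤ phiEnd om ga ∧ |p.2| ≤ phiF om ga p.1}

section domain

variable {om ga : ℝ}

theorem isOpen_OmDom (hs : 0 < √om) (hgs : 1 ≤ ga * √om) : IsOpen (OmDom om ga) := by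
  have hOm : OmDom om ga = {p | |p.1| < phiEnd om ga} ∩ {p | |p.2| < phiF om ga p.1} := by
    ext p
    refine ⟨fun ⟨h₁, h₂⟩ => ⟨lt_of_le_of_ne h₁ fun h => ?_, h₂⟩,
      fun ⟨h₁, h₂⟩ => ⟨h₁.le, h₂⟩⟩
    rw [phiF_eq_zero_of_abs_eq_phiEnd hs hgs h] at h₂
    exact (abs_nonneg _).not_gt h₂
  rw [hOm]
  exact (isOpen_lt (continuous_abs.comp continuous_fst) continuous_const).inter
    (isOpen_lt (continuous_abs.comp continuous_snd) ((continuous_phiF om ga).comp continuous_fst))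

theorem closure_OmDom_subset : closure (OmDom om ga) ⊆ OmDomClosed om ga :=
  closure_minimal (fun _ hp => ⟨hp.1, hp.2.le⟩) <|
    (isClosed_le (continuous_abs.comp continuous_fst) continuous_const).inter
      (isClosed_le (continuous_abs.comp continuous_snd)
        ((continuous_phiF om ga).comp continuous_fst))

theorem uEig_eq_of_mem_OmDomClosed (hs : 0 < √om) (hgs : 1 ≤ ga * √om) (hga : ga ≤ √om)
    {p : ℝ × ℝ} (hp : p ∈ OmDomClosed om ga) :
    uEig om ga p.1 p.2 = cosProfile √om |p.2| - cosProfile √om (phiF om ga p.1) := by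
  obtain ⟨-, hφ₂, hφ₃⟩ := phiF_spec hs hgs hga hp.1
  rw [uEig_eq_cosProfile fun hx => hp.2.trans (hφ₂ hx), hφ₃, cosProfile_abs]
  ring

theorem continuousOn_uEig (hs : 0 < √om) (hgs : 1 ≤ ga * √om) (hga : ga ≤ √om) :
    ContinuousOn (fun p : ℝ × ℝ => uEig om ga p.1 p.2) (closure (OmDom om ga)) := by
  refine ContinuousOn.congr (Continuous.continuousOn ?_) fun p hp =>
    uEig_eq_of_mem_OmDomClosed hs hgs hga (closure_OmDom_subset hp)
  have hP := continuous_cosProfile √om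
  exact (hP.comp (continuous_abs.comp continuous_snd)).sub
    (hP.comp ((continuous_phiF om ga).comp continuous_fst))

theorem uEig_pos (hs : 0 < √om) (hgs : 1 ≤ ga * √om) (hga : ga ≤ √om) {p : ℝ × ℝ}
    (hp : p ∈ OmDom om ga) : 0 < uEig om ga p.1 p.2 := by
  obtain ⟨hφ₁, -, -⟩ := phiF_spec hs hgs hga hp.1
  rw [uEig_eq_of_mem_OmDomClosed hs hgs hga ⟨hp.1, hp.2.le⟩, sub_pos]
  exact strictAntiOn_cosProfile hs ⟨abs_nonneg _, hp.2.le.trans hφ₁.2⟩ hφ₁ hp.2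

theorem uEig_eq_zero_of_mem_frontier (hs : 0 < √om) (hgs : 1 ≤ ga * √om) (hga : ga ≤ √om)
    {p : ℝ × ℝ} (hp : p ∈ frontier (OmDom om ga)) : uEig om ga p.1 p.2 = 0 := by
  have hpC := closure_OmDom_subset (frontier_subset_closure hp)
  have hpΩ : p ∉ OmDom om ga := by
    rw [(isOpen_OmDom hs hgs).frontier_eq] at hp
    exact hp.2
  have hy : |p.2| = phiF om ga p.1 := le_antisymm hpC.2 (not_lt.1 fun h => hpΩ ⟨hpC.1, h⟩)
  rw [uEig_eq_of_mem_OmDomClosed hs hgs hga hpC, hy, sub_self]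

end domain

/-- For `ω ≥ 1` and `γ ∈ [1/√ω, √ω]`, the function `u^ω_γ` is continuous on the closure
of `Ω^ω_γ`, strictly positive in `Ω^ω_γ`, and vanishes on `∂Ω^ω_γ`. -/
theorem stmt8 (om ga : ℝ) (hom : 1 ≤ om)
    (hga1 : 1 / Real.sqrt om ≤ ga) (hga2 : ga ≤ Real.sqrt om) :
    ContinuousOn (fun p : ℝ × ℝ => uEig om ga p.1 p.2) (closure (OmDom om ga)) ∧
    (∀ p ∈ OmDom om ga, 0 < uEig om ga p.1 p.2) ∧
    (∀ p ∈ frontier (OmDom om ga), uEig om ga p.1 p.2 = 0) := by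
  have hs : 0 < √om := sqrt_pos.2 (by linarith)
  have hgs : 1 ≤ ga * √om := by rwa [div_le_iff₀ hs] at hga1
  exact ⟨continuousOn_uEig hs hgs hga2, fun _ => uEig_pos hs hgs hga2,
    fun _ => uEig_eq_zero_of_mem_frontier hs hgs hga2⟩
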